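/- Let (fᵢ) be a sequence of functions [0,∞) → ℝ and K > 0 such that each t ↦ fᵢ(t) − Kt is nonincreasing, and suppose fᵢ(t) converges for all t in a dense subset B₀ ⊂ [0,∞) to a limit f(t). Then there is a countable set B ⊂ [0,∞) such that for every s ∈ [0,∞) ∖ B, the full sequence fᵢ(s) converges, with limit equal to lim_{t→s, t∈B₀} f(t). -/
import Mathlib


open Filter Set

/-- If the functions `fᵢ` are uniformly semi-decreasing (`fᵢ(t) − Kt` nonincreasing on `[0,∞)`)
and converge pointwise on a dense subset `B₀ ⊆ [0,∞)` to `g`, then outside a countable set `B`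
the full sequence converges, with limit equal to the limit of `g` along `B₀`. -/
theorem stmt7 (f : ℕ → ℝ → ℝ) (K : ℝ) (hK : 0 < K)
    (hmono : ∀ i, AntitoneOn (fun t => f i t - K * t) (Set.Ici 0))
    (B₀ : Set ℝ) (hB₀ : B₀ ⊆ Set.Ici 0) (hdense : Set.Ici (0 : ℝ) ⊆ closure B₀)
    (g : ℝ → ℝ) (hconv : ∀ t ∈ B₀, Tendsto (fun i => f i t) atTop (nhds (g t))) :
    ∃ B : Set ℝ, B.Countable ∧ ∀ s ∈ Set.Ici (0 : ℝ) \ B,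
      ∃ L : ℝ, Tendsto (fun i => f i s) atTop (nhds L) ∧
        Tendsto g (nhdsWithin s B₀) (nhds L) := by
  classical
  set h : ℝ → ℝ := fun t => g t - K * t with hh
  -- h is antitone on B₀
  have hanti : ∀ t₁ ∈ B₀, ∀ t₂ ∈ B₀, t₁ ≤ t₂ → h t₂ ≤ h t₁ := by
    intro t₁ h₁ t₂ h₂ hle
    have l₁ : Tendsto (fun i => f i t₁ - K * t₁) atTop (nhds (h t₁)) :=
      (hconv t₁ h₁).sub tendsto_const_nhds
    have l₂ : Tendsto (fun i => f i t₂ - K * t₂) atTop (nhds (h t₂)) :=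
      (hconv t₂ h₂).sub tendsto_const_nhds
    exact le_of_tendsto_of_tendsto' l₂ l₁ fun i => hmono i (hB₀ h₁) (hB₀ h₂) hle
  -- density
  have hdns : ∀ a b : ℝ, 0 ≤ a → a < b → (B₀ ∩ Ioo a b).Nonempty := by
    intro a b ha hab
    have hm : (a + b) / 2 ∈ closure B₀ := hdense (by simp only [mem_Ici]; linarith)
    have := (mem_closure_iff.1 hm) (Ioo a b) isOpen_Ioo
      (Set.mem_Ioo.2 ⟨by linarith, by linarith⟩)
    exact this.imp fun x hx => ⟨hx.2, hx.1⟩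
  set S₁ : ℝ → Set ℝ := fun s => h '' (B₀ ∩ Ico 0 s) with hS₁
  set S₂ : ℝ → Set ℝ := fun s => h '' (B₀ ∩ Ioi s) with hS₂
  have ne₁ : ∀ s : ℝ, 0 < s → (S₁ s).Nonempty := by
    intro s hs
    obtain ⟨t, ht, htm⟩ := hdns 0 s le_rfl hs
    exact ⟨h t, ⟨t, ⟨ht, ⟨le_of_lt htm.1, htm.2⟩⟩, rfl⟩⟩
  have ne₂ : ∀ s : ℝ, 0 < s → (S₂ s).Nonempty := by
    intro s hs
    obtain ⟨t, ht, htm⟩ := hdns s (s + 1) hs.le (by linarith)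
    exact ⟨h t, ⟨t, ⟨ht, htm.1⟩, rfl⟩⟩
  have key : ∀ s : ℝ, ∀ a ∈ S₂ s, ∀ b ∈ S₁ s, a ≤ b := by
    rintro s a ⟨t₂, ⟨ht₂, hm₂⟩, rfl⟩ b ⟨t₁, ⟨ht₁, hm₁⟩, rfl⟩
    exact hanti t₁ ht₁ t₂ ht₂ (le_of_lt (lt_trans hm₁.2 hm₂))
  have bdd₁ : ∀ s : ℝ, 0 < s → BddBelow (S₁ s) := by
    intro s hs
    obtain ⟨a, ha⟩ := ne₂ s hs
    exact ⟨a, fun b hb => key s a ha b hb⟩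
  have bdd₂ : ∀ s : ℝ, 0 < s → BddAbove (S₂ s) := by
    intro s hs
    obtain ⟨b, hb⟩ := ne₁ s hs
    exact ⟨b, fun a ha => key s a ha b hb⟩
  have hsupinf : ∀ s : ℝ, 0 < s → sSup (S₂ s) ≤ sInf (S₁ s) := by
    intro s hs
    exact csSup_le (ne₂ s hs) fun a ha => le_csInf (ne₁ s hs) fun b hb => key s a ha b hb
  set bad : Set ℝ := {s | 0 < s ∧ sSup (S₂ s) < sInf (S₁ s)} with hbad
  -- bad is countable
  have hbadc : bad.Countable := by
    have hq : ∀ s ∈ bad, ∃ q : ℚ, sSup (S₂ s) < (q : ℝ) ∧ (q : ℝ) < sInf (S₁ s) := by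
      intro s hs; exact exists_rat_btwn hs.2
    choose! q hq1 hq2 using hq
    rw [Set.countable_iff_exists_injOn]
    refine ⟨fun s => Encodable.encode (q s), fun s hs s' hs' hss => ?_⟩
    have hqq : q s = q s' := Encodable.encode_injective hss
    by_contra hne
    -- wlog s < s'
    rcases lt_or_gt_of_ne hne with hlt | hlt
    · obtain ⟨t, ht, htm⟩ := hdns s s' hs.1.le hlt
      have h1 : h t ≤ sSup (S₂ s) := le_csSup (bdd₂ s hs.1) ⟨t, ⟨ht, htm.1⟩, rfl⟩
      have h2 : sInf (S₁ s') ≤ h t :=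
        csInf_le (bdd₁ s' hs'.1) ⟨t, ⟨ht, ⟨le_trans hs.1.le htm.1.le, htm.2⟩⟩, rfl⟩
      have hc := congrArg (fun r : ℚ => (r : ℝ)) hqq
      linarith [hq1 s hs, hq2 s' hs']
    · obtain ⟨t, ht, htm⟩ := hdns s' s hs'.1.le hlt
      have h1 : h t ≤ sSup (S₂ s') := le_csSup (bdd₂ s' hs'.1) ⟨t, ⟨ht, htm.1⟩, rfl⟩
      have h2 : sInf (S₁ s) ≤ h t :=
        csInf_le (bdd₁ s hs.1) ⟨t, ⟨ht, ⟨le_trans hs'.1.le htm.1.le, htm.2⟩⟩, rfl⟩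
      have hc := congrArg (fun r : ℚ => (r : ℝ)) hqq
      linarith [hq1 s' hs', hq2 s hs]
  refine ⟨insert 0 bad, hbadc.insert 0, ?_⟩
  rintro s ⟨hs0, hsB⟩
  have hspos : 0 < s := lt_of_le_of_ne hs0
    (fun h0 => hsB (by rw [← h0]; exact mem_insert _ _))
  have hsnb : ¬(sSup (S₂ s) < sInf (S₁ s)) := fun hc => hsB (mem_insert_iff.2 (Or.inr ⟨hspos, hc⟩))
  obtain ⟨M, hM⟩ : ∃ M : ℝ, sSup (S₂ s) = M := ⟨_, rfl⟩
  rw [hM] at hsnb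
  have hMinf : sInf (S₁ s) = M := le_antisymm (not_lt.1 hsnb) (hM ▸ hsupinf s hspos)
  -- approximating points
  have happrox : ∀ ε : ℝ, 0 < ε → ∃ t₁, t₁ ∈ B₀ ∧ 0 ≤ t₁ ∧ t₁ < s ∧ h t₁ < M + ε := by
    intro ε hε
    have : sInf (S₁ s) < M + ε := by rw [hMinf]; linarith
    obtain ⟨b, ⟨t₁, ⟨ht₁, hm₁⟩, rfl⟩, hbs⟩ := (csInf_lt_iff (bdd₁ s hspos) (ne₁ s hspos)).1 this
    exact ⟨t₁, ht₁, hm₁.1, hm₁.2, hbs⟩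
  have happrox' : ∀ ε : ℝ, 0 < ε → ∃ t₂, t₂ ∈ B₀ ∧ s < t₂ ∧ M - ε < h t₂ := by
    intro ε hε
    have : M - ε < sSup (S₂ s) := by rw [hM]; linarith
    obtain ⟨b, ⟨t₂, ⟨ht₂, hm₂⟩, rfl⟩, hbs⟩ := (lt_csSup_iff (bdd₂ s hspos) (ne₂ s hspos)).1 this
    exact ⟨t₂, ht₂, hm₂, hbs⟩
  -- part 1: convergence of f i s
  have part1 : Tendsto (fun i => f i s) atTop (nhds (M + K * s)) := by
    rw [Metric.tendsto_nhds]
    intro ε hε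
    obtain ⟨t₁, ht₁, ht₁0, ht₁s, ht₁M⟩ := happrox (ε / 2) (by linarith)
    obtain ⟨t₂, ht₂, ht₂s, ht₂M⟩ := happrox' (ε / 2) (by linarith)
    have e₁ := (hconv t₁ ht₁).eventually (Metric.ball_mem_nhds (g t₁) (show (0:ℝ) < ε/2 by linarith))
    have e₂ := (hconv t₂ ht₂).eventually (Metric.ball_mem_nhds (g t₂) (show (0:ℝ) < ε/2 by linarith))
    filter_upwards [e₁, e₂] with i hi₁ hi₂
    simp only [Metric.mem_ball, Real.dist_eq] at hi₁ hi₂ ⊢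
    have hab₁ : |f i t₁ - g t₁| < ε/2 := hi₁
    have hab₂ : |f i t₂ - g t₂| < ε/2 := hi₂
    rw [abs_lt] at hab₁ hab₂ ⊢
    have m₁ : f i s - K * s ≤ f i t₁ - K * t₁ :=
      hmono i (mem_Ici.2 ht₁0) (mem_Ici.2 hs0) ht₁s.le
    have m₂ : f i t₂ - K * t₂ ≤ f i s - K * s :=
      hmono i (mem_Ici.2 hs0) (mem_Ici.2 (le_trans hs0 ht₂s.le)) ht₂s.le
    have hht₁ : h t₁ = g t₁ - K * t₁ := rfl
    have hht₂ : h t₂ = g t₂ - K * t₂ := rfl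
    constructor
    · nlinarith [hab₂.1, ht₂M]
    · nlinarith [hab₁.2, ht₁M]
  refine ⟨M + K * s, part1, ?_⟩
  -- part 2
  have part2h : Tendsto h (nhdsWithin s B₀) (nhds M) := by
    rw [Metric.tendsto_nhds]
    intro ε hε
    obtain ⟨t₁, ht₁, ht₁0, ht₁s, ht₁M⟩ := happrox (ε / 2) (by linarith)
    obtain ⟨t₂, ht₂, ht₂s, ht₂M⟩ := happrox' (ε / 2) (by linarith)
    have hmem : Ioo t₁ t₂ ∈ nhdsWithin s B₀ :=
      nhdsWithin_le_nhds (Ioo_mem_nhds ht₁s ht₂s)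
    have hself : B₀ ∈ nhdsWithin s B₀ := self_mem_nhdsWithin
    filter_upwards [hmem, hself] with t htI htB
    rw [Real.dist_eq, abs_lt]
    rcases lt_trichotomy t s with hts | hts | hts
    · have hmem₁ : h t ∈ S₁ s := ⟨t, ⟨htB, ⟨hB₀ htB, hts⟩⟩, rfl⟩
      have low : M ≤ h t := hMinf ▸ csInf_le (bdd₁ s hspos) hmem₁
      have high : h t ≤ h t₁ := hanti t₁ ht₁ t htB htI.1.le
      have hup : h t < M + ε := lt_of_le_of_lt high (lt_of_lt_of_le ht₁M (by linarith))
      exact ⟨by linarith, by linarith⟩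
    · -- t = s ∈ B₀; then g s = M + K s by uniqueness of limits
      subst hts
      have : g t = M + K * t := tendsto_nhds_unique (hconv t htB) part1
      have : h t = M := by rw [hh]; simp only; linarith
      rw [this]; constructor <;> linarith
    · have hmem₂ : h t ∈ S₂ s := ⟨t, ⟨htB, hts⟩, rfl⟩
      have high : h t ≤ M := hM ▸ le_csSup (bdd₂ s hspos) hmem₂
      have low : h t₂ ≤ h t := hanti t htB t₂ ht₂ htI.2.le
      have hlo : M - ε < h t := lt_of_le_of_lt (by linarith : M - ε ≤ M - ε/2)
        (lt_of_lt_of_le ht₂M low)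
      exact ⟨by linarith, by linarith⟩
  have partK : Tendsto (fun t => K * t) (nhdsWithin s B₀) (nhds (K * s)) :=
    ((continuous_const.mul continuous_id).tendsto s).mono_left nhdsWithin_le_nhds
  have := part2h.add partK
  refine this.congr fun t => ?_
  simp only [hh]; ring
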